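/- Let φ, ψ : [0,T] → ℝ be λ-Hölder continuous with φ(t) < ψ(t) for all t, and let b : D_{0,0} → ℝ (D_{0,0} = {(t,y) : φ(t) < y < ψ(t)}) be continuous, locally Lipschitz in y on each D_{ε₁,ε₂}, satisfy b(t,y) ≥ c(y−φ(t))^{−γ} when y − φ(t) < y* and b(t,y) ≤ −c(ψ(t)−y)^{−γ} when ψ(t) − y < y*, with γ > (1−λ)/λ. Then for any λ-Hölder continuous path Z with Z(0) = 0 and any Y₀ ∈ (φ(0), ψ(0)), the integral equation Y(t) = Y₀ + ∫₀ᵗ b(s,Y(s)) ds + Z(t) has a unique continuous solution on [0,T], and this solution satisfies φ(t) < Y(t) < ψ(t) for all t ∈ [0,T]. -/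

import Mathlib

/-!
Truncate the drift outside the band `φ + δ ≤ y ≤ ψ - δ`. The truncated drift is bounded and
globally Lipschitz, so after subtracting the noise, Picard–Lindelöf and Grönwall give a unique
solution of the truncated equation. An a priori estimate shows that every solution of either
equation keeps a distance greater than `ε / 2 ≥ δ` from both barriers, where the two drifts agree;
so the two equations have the same solutions.

The estimate: if the gap `Y - φ` fell from `ε` to `ε / 2` within a time `Δ`, then the drift,
at least `c ε^(-γ)` on that stretch, would raise it by `c ε^(-γ) Δ`, while the noise and the
barrier, both `λ`-Hölder with constants adding up to `A`, move it by at most `A Δ^λ`. Since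
`γλ + λ > 1`, `A Δ^λ < c ε^(-γ) Δ + ε / 2` for all `Δ > 0` once `ε` is small.
-/

open Set Real MeasureTheory Filter Topology Function
open scoped NNReal

namespace Sandwich

theorem rpow_mul_rpow_one_sub_le_add {x y lam : ℝ} (hx : 0 ≤ x) (hy : 0 ≤ y)
    (hlam : lam ∈ Icc (0 : ℝ) 1) : x ^ lam * y ^ (1 - lam) ≤ x + y :=
  calc x ^ lam * y ^ (1 - lam) ≤ lam * x + (1 - lam) * y :=
        geom_mean_le_arith_mean2_weighted hlam.1 (sub_nonneg.2 hlam.2) hx hy (by ring)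
    _ ≤ x + y := by nlinarith [hlam.1, hlam.2]

theorem tendsto_rpow_mul_rpow_atTop {lam gam c : ℝ} (hlam : lam ∈ Ioo (0 : ℝ) 1)
    (hgam : (1 - lam) / lam < gam) (hc : 0 < c) :
    Tendsto (fun ε : ℝ => (c * ε ^ (-gam)) ^ lam * (ε / 2) ^ (1 - lam)) (𝓝[>] 0) atTop := by
  have hexp : 1 - lam - gam * lam < 0 := by
    have := (div_lt_iff₀ hlam.1).1 hgam
    linarith
  have hC : 0 < c ^ lam / 2 ^ (1 - lam) := by positivity
  refine ((tendsto_rpow_neg_nhdsGT_zero hexp).const_mul_atTop hC).congr' ?_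
  filter_upwards [self_mem_nhdsWithin] with ε (hε : 0 < ε)
  rw [mul_rpow hc.le (rpow_nonneg hε.le _), ← rpow_mul hε.le, div_rpow hε.le zero_le_two,
    show 1 - lam - gam * lam = -gam * lam + (1 - lam) by ring, rpow_add hε]
  ring

theorem eventually_forall_rpow_lt {lam gam c : ℝ} (A : ℝ) (hlam : lam ∈ Ioo (0 : ℝ) 1)
    (hgam : (1 - lam) / lam < gam) (hc : 0 < c) :
    ∀ᶠ ε in 𝓝[>] 0, ∀ Δ > 0, A * Δ ^ lam < c * ε ^ (-gam) * Δ + ε / 2 := by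
  filter_upwards [(tendsto_rpow_mul_rpow_atTop hlam hgam hc).eventually_gt_atTop A,
    self_mem_nhdsWithin] with ε hA (hε : 0 < ε) Δ hΔ
  calc A * Δ ^ lam < (c * ε ^ (-gam)) ^ lam * (ε / 2) ^ (1 - lam) * Δ ^ lam :=
        mul_lt_mul_of_pos_right hA (rpow_pos_of_pos hΔ lam)
    _ = (c * ε ^ (-gam) * Δ) ^ lam * (ε / 2) ^ (1 - lam) := by
        rw [mul_rpow (by positivity) hΔ.le]; ring
    _ ≤ c * ε ^ (-gam) * Δ + ε / 2 :=
        rpow_mul_rpow_one_sub_le_add (by positivity) (by positivity) (Ioo_subset_Icc_self hlam)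

theorem continuousOn_of_abs_sub_le_rpow {u : ℝ → ℝ} {s : Set ℝ} {K lam : ℝ} (hlam : 0 < lam)
    (hu : ∀ x ∈ s, ∀ y ∈ s, |u y - u x| ≤ K * |y - x| ^ lam) : ContinuousOn u s := by
  intro x hx
  have hbound : Tendsto (fun y => K * |y - x| ^ lam) (𝓝[s] x) (𝓝 0) := by
    have : ContinuousAt (fun y => K * |y - x| ^ lam) x := by fun_prop (disch := positivity)
    simpa [zero_rpow hlam.ne'] using (this.continuousWithinAt (s := s)).tendsto
  refine tendsto_iff_dist_tendsto_zero.2 (squeeze_zero' (.of_forall fun _ => dist_nonneg) ?_ hbound)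
  filter_upwards [self_mem_nhdsWithin] with y hy
  exact hu x hx y hy

theorem exists_first_eq {u : ℝ → ℝ} {a b x : ℝ} (hab : a ≤ b) (hu : ContinuousOn u (Icc a b))
    (ha : x < u a) (hb : u b ≤ x) : ∃ c ∈ Icc a b, u c = x ∧ ∀ r ∈ Icc a c, x ≤ u r := by
  set S := Icc a b ∩ u ⁻¹' Iic x
  have hbdd : BddBelow S := ⟨a, fun r hr => hr.1.1⟩
  have hcS : sInf S ∈ S :=
    (hu.preimage_isClosed_of_isClosed isClosed_Icc isClosed_Iic).csInf_mem
      ⟨b, ⟨hab, le_rfl⟩, hb⟩ hbdd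
  set c := sInf S
  have hfirst : ∀ r ∈ Icc a c, u r ≤ x → r = c := fun r hr hrx =>
    le_antisymm hr.2 (csInf_le hbdd ⟨⟨hr.1, hr.2.trans hcS.1.2⟩, hrx⟩)
  obtain ⟨r, hr, hur⟩ :=
    intermediate_value_Icc' hcS.1.1 (hu.mono (Icc_subset_Icc_right hcS.1.2)) ⟨hcS.2, ha.le⟩
  have hxc : u c = x := hfirst r hr hur.le ▸ hur
  refine ⟨c, hcS.1, hxc, fun r hr => not_lt.1 fun hlt => ?_⟩
  exact hlt.ne (hfirst r hr hlt.le ▸ hxc)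

theorem exists_last_eq {u : ℝ → ℝ} {a b x : ℝ} (hab : a ≤ b) (hu : ContinuousOn u (Icc a b))
    (ha : x ≤ u a) (hb : u b < x) : ∃ c ∈ Ico a b, u c = x ∧ ∀ r ∈ Icc c b, u r ≤ x := by
  set S := Icc a b ∩ u ⁻¹' Ici x
  have hbdd : BddAbove S := ⟨b, fun r hr => hr.1.2⟩
  have hcS : sSup S ∈ S :=
    (hu.preimage_isClosed_of_isClosed isClosed_Icc isClosed_Ici).csSup_mem
      ⟨a, ⟨le_rfl, hab⟩, ha⟩ hbdd
  set c := sSup S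
  have hlast : ∀ r ∈ Icc c b, x ≤ u r → r = c := fun r hr hrx =>
    le_antisymm (le_csSup hbdd ⟨⟨hcS.1.1.trans hr.1, hr.2⟩, hrx⟩) hr.1
  obtain ⟨r, hr, hur⟩ :=
    intermediate_value_Icc' hcS.1.2 (hu.mono (Icc_subset_Icc_left hcS.1.1)) ⟨hb.le, hcS.2⟩
  have hxc : u c = x := hlast r hr hur.ge ▸ hur
  refine ⟨c, ⟨hcS.1.1, lt_of_le_of_ne hcS.1.2 fun hcb => hb.ne (hcb ▸ hxc)⟩, hxc,
    fun r hr => not_lt.1 fun hlt => ?_⟩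
  exact hlt.ne' (hlast r hr hlt.le ▸ hxc)

theorem half_lt_of_sub_ge {u : ℝ → ℝ} {a b ε κ A lam : ℝ} (hab : a ≤ b)
    (hu : ContinuousOn u (Icc a b)) (hε : 0 < ε) (ha : ε ≤ u a)
    (hinc : ∀ s ∈ Icc a b, (∀ r ∈ Icc s b, u r ≤ ε) →
      κ * (b - s) - A * (b - s) ^ lam ≤ u b - u s)
    (hkey : ∀ Δ > 0, A * Δ ^ lam < κ * Δ + ε / 2) : ε / 2 < u b := by
  by_contra! hb
  obtain ⟨c, hc, huc, hle⟩ := exists_last_eq hab hu ha (by linarith)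
  have := hinc c (Ico_subset_Icc_self hc) hle
  have := hkey (b - c) (sub_pos.2 hc.2)
  linarith

theorem mul_sub_le_integral {h : ℝ → ℝ} {s t κ : ℝ} (hst : s ≤ t) (hh : ContinuousOn h (Icc s t))
    (hκ : ∀ r ∈ Icc s t, κ ≤ h r) : κ * (t - s) ≤ ∫ r in s..t, h r := by
  simpa [mul_comm] using intervalIntegral.integral_mono_on (μ := volume) hst
    intervalIntegrable_const (hh.intervalIntegrable_of_Icc hst) hκ

def IsSolution (β : ℝ → ℝ → ℝ) (Z : ℝ → ℝ) (Y₀ T : ℝ) (Y : ℝ → ℝ) : Prop :=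
  ContinuousOn Y (Icc 0 T) ∧ ∀ t ∈ Icc 0 T, Y t = Y₀ + (∫ s in (0 : ℝ)..t, β s (Y s)) + Z t

section IsSolution

variable {φ ψ Z Y : ℝ → ℝ} {β : ℝ → ℝ → ℝ} {T Y₀ ε κ A lam : ℝ}

theorem IsSolution.sub_eq (hY : IsSolution β Z Y₀ T Y) {s t : ℝ} (hs : s ∈ Icc 0 t) (ht : t ≤ T)
    (hβY : ContinuousOn (fun r => β r (Y r)) (Icc 0 t)) :
    Y t - Y s = (∫ r in s..t, β r (Y r)) + (Z t - Z s) := by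
  rw [hY.2 t ⟨hs.1.trans hs.2, ht⟩, hY.2 s ⟨hs.1, hs.2.trans ht⟩,
    ← intervalIntegral.integral_interval_sub_left (hβY.intervalIntegrable_of_Icc (hs.1.trans hs.2))
      ((hβY.mono (Icc_subset_Icc_right hs.2)).intervalIntegrable_of_Icc hs.1)]
  ring

/-- Up to the first time `τ` at which a gap reaches `ε / 2` the path stays in the band where the
drift bounds hold, so `half_lt_of_sub_ge` applies to both gaps on `[0, τ]`. -/
theorem IsSolution.half_lt_gap (hY : IsSolution β Z Y₀ T Y)
    (hφ : ContinuousOn φ (Icc 0 T)) (hψ : ContinuousOn ψ (Icc 0 T))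
    (hβ : ContinuousOn (uncurry β) {p : ℝ × ℝ | p.1 ∈ Icc 0 T ∧ φ p.1 < p.2 ∧ p.2 < ψ p.1})
    (hZ0 : Z 0 = 0) (hε : 0 < ε) (hY₀ : ε ≤ min (Y₀ - φ 0) (ψ 0 - Y₀))
    (hHol : ∀ s ∈ Icc 0 T, ∀ t ∈ Icc s T,
      |φ t - φ s| + |ψ t - ψ s| + |Z t - Z s| ≤ A * (t - s) ^ lam)
    (hlow : ∀ t ∈ Icc 0 T, ∀ y, φ t + ε / 2 ≤ y → y ≤ φ t + ε → y ≤ ψ t - ε / 2 → κ ≤ β t y)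
    (hup : ∀ t ∈ Icc 0 T, ∀ y, φ t + ε / 2 ≤ y → ψ t - ε ≤ y → y ≤ ψ t - ε / 2 → β t y ≤ -κ)
    (hkey : ∀ Δ > 0, A * Δ ^ lam < κ * Δ + ε / 2) :
    ∀ t ∈ Icc 0 T, ε / 2 < Y t - φ t ∧ ε / 2 < ψ t - Y t := by
  intro t₀ ht₀
  rw [← lt_min_iff]
  by_contra! hbad
  have hY0 : Y 0 = Y₀ := by simpa [hZ0] using hY.2 0 ⟨le_rfl, ht₀.1.trans ht₀.2⟩
  have hf : ContinuousOn (fun t => Y t - φ t) (Icc 0 T) := hY.1.sub hφ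
  have hg : ContinuousOn (fun t => ψ t - Y t) (Icc 0 T) := hψ.sub hY.1
  obtain ⟨τ, hτ, hmτ, hband⟩ := exists_first_eq (u := fun t => min (Y t - φ t) (ψ t - Y t)) ht₀.1
    ((hf.inf hg).mono (Icc_subset_Icc_right ht₀.2))
    (by rw [hY0]; linarith) hbad
  have hτT : τ ≤ T := hτ.2.trans ht₀.2
  have hsub : Icc 0 τ ⊆ Icc 0 T := Icc_subset_Icc_right hτT
  replace hband : ∀ r ∈ Icc 0 τ, ε / 2 ≤ Y r - φ r ∧ ε / 2 ≤ ψ r - Y r :=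
    fun r hr => le_min_iff.1 (hband r hr)
  have hβY : ContinuousOn (fun r => β r (Y r)) (Icc 0 τ) :=
    hβ.comp (continuousOn_id.prodMk (hY.1.mono hsub)) fun r hr => by
      simp only [id]
      exact ⟨hsub hr, by linarith [hband r hr], by linarith [hband r hr]⟩
  have hlower : ε / 2 < Y τ - φ τ := by
    refine half_lt_of_sub_ge (u := fun t => Y t - φ t) hτ.1 (hf.mono hsub) hε
      (by rw [hY0]; exact (le_min_iff.1 hY₀).1) (fun s hs hle => ?_) hkey
    have hsτ : Icc s τ ⊆ Icc 0 τ := Icc_subset_Icc_left hs.1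
    have hint := mul_sub_le_integral hs.2 (hβY.mono hsτ) fun r hr =>
      hlow r (hsub (hsτ hr)) (Y r) (by linarith [hband r (hsτ hr)]) (by linarith [hle r hr])
        (by linarith [hband r (hsτ hr)])
    have := hHol s (hsub hs) τ ⟨hs.2, hτT⟩
    linarith [hY.sub_eq hs hτT hβY, le_abs_self (φ τ - φ s), neg_abs_le (Z τ - Z s),
      abs_nonneg (ψ τ - ψ s)]
  have hupper : ε / 2 < ψ τ - Y τ := by
    refine half_lt_of_sub_ge (u := fun t => ψ t - Y t) hτ.1 (hg.mono hsub) hε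
      (by rw [hY0]; exact (le_min_iff.1 hY₀).2) (fun s hs hle => ?_) hkey
    have hsτ : Icc s τ ⊆ Icc 0 τ := Icc_subset_Icc_left hs.1
    have hint := mul_sub_le_integral (h := fun r => -β r (Y r)) hs.2 (hβY.mono hsτ).neg
      fun r hr => le_neg.2 <| hup r (hsub (hsτ hr)) (Y r) (by linarith [hband r (hsτ hr)])
        (by linarith [hle r hr]) (by linarith [hband r (hsτ hr)])
    rw [intervalIntegral.integral_neg] at hint
    have := hHol s (hsub hs) τ ⟨hs.2, hτT⟩
    linarith [hY.sub_eq hs hτT hβY, neg_abs_le (ψ τ - ψ s), le_abs_self (Z τ - Z s),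
      abs_nonneg (φ τ - φ s)]
  exact (lt_min hlower hupper).ne' hmτ

theorem IsSolution.congr {β' : ℝ → ℝ → ℝ} (hY : IsSolution β Z Y₀ T Y)
    (h : ∀ t ∈ Icc 0 T, β t (Y t) = β' t (Y t)) : IsSolution β' Z Y₀ T Y := by
  refine ⟨hY.1, fun t ht => (hY.2 t ht).trans ?_⟩
  rw [intervalIntegral.integral_congr fun s hs =>
    h s (uIcc_subset_Icc (left_mem_Icc.2 (ht.1.trans ht.2)) ht hs)]

theorem IsSolution.half_lt_gap_of_blowup {b : ℝ → ℝ → ℝ} {K Lz c gam ystar : ℝ}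
    (hY : IsSolution β Z Y₀ T Y) (hφ : ContinuousOn φ (Icc 0 T)) (hψ : ContinuousOn ψ (Icc 0 T))
    (hβ : ContinuousOn (uncurry β) {p : ℝ × ℝ | p.1 ∈ Icc 0 T ∧ φ p.1 < p.2 ∧ p.2 < ψ p.1})
    (hZ0 : Z 0 = 0) (hε : 0 < ε) (hY₀ : ε ≤ min (Y₀ - φ 0) (ψ 0 - Y₀))
    (hHol : ∀ s ∈ Icc 0 T, ∀ t ∈ Icc 0 T, |φ t - φ s| + |ψ t - ψ s| ≤ K * |t - s| ^ lam)
    (hZH : ∀ s ∈ Icc 0 T, ∀ t ∈ Icc 0 T, |Z t - Z s| ≤ Lz * |t - s| ^ lam)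
    (hkey : ∀ Δ > 0, (K + Lz) * Δ ^ lam < c * ε ^ (-gam) * Δ + ε / 2) (hc : 0 ≤ c)
    (hgam : 0 ≤ gam) (hεy : ε < ystar)
    (hβb : ∀ t ∈ Icc 0 T, ∀ y, φ t + ε / 2 ≤ y → y ≤ ψ t - ε / 2 → β t y = b t y)
    (hblow₁ : ∀ t ∈ Icc 0 T, ∀ y : ℝ, φ t < y → y < ψ t →
      y - φ t < ystar → c * (y - φ t) ^ (-gam) ≤ b t y)
    (hblow₂ : ∀ t ∈ Icc 0 T, ∀ y : ℝ, φ t < y → y < ψ t →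
      ψ t - y < ystar → b t y ≤ -(c * (ψ t - y) ^ (-gam))) :
    ∀ t ∈ Icc 0 T, ε / 2 < Y t - φ t ∧ ε / 2 < ψ t - Y t := by
  have hHolZ : ∀ s ∈ Icc 0 T, ∀ t ∈ Icc s T,
      |φ t - φ s| + |ψ t - ψ s| + |Z t - Z s| ≤ (K + Lz) * (t - s) ^ lam := by
    intro s hs t ht
    have h₁ := hHol s hs t ⟨hs.1.trans ht.1, ht.2⟩
    have h₂ := hZH s hs t ⟨hs.1.trans ht.1, ht.2⟩
    rw [abs_of_nonneg (sub_nonneg.2 ht.1)] at h₁ h₂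
    linarith
  have hmono : ∀ x, 0 < x → x ≤ ε → c * ε ^ (-gam) ≤ c * x ^ (-gam) := fun x hx hxε =>
    mul_le_mul_of_nonneg_left (rpow_le_rpow_of_nonpos hx hxε (neg_nonpos.2 hgam)) hc
  refine hY.half_lt_gap hφ hψ hβ hZ0 hε hY₀ hHolZ (fun t ht y h₁ h₂ h₃ => ?_)
    (fun t ht y h₁ h₂ h₃ => ?_) hkey
  · rw [hβb t ht y h₁ h₃]
    exact (hmono _ (by linarith) (by linarith)).trans
      (hblow₁ t ht y (by linarith) (by linarith) (by linarith))
  · rw [hβb t ht y h₁ h₃]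
    linarith [hmono (ψ t - y) (by linarith) (by linarith),
      hblow₂ t ht y (by linarith) (by linarith) (by linarith)]

end IsSolution

section Lipschitz

variable {F : ℝ → ℝ → ℝ} {Z Y Y' : ℝ → ℝ} {T Y₀ : ℝ}

theorem lipschitzWith_comp_add_right {L : ℝ≥0} (hL : ∀ t ∈ Icc 0 T, LipschitzWith L (F t))
    {t : ℝ} (ht : t ∈ Icc 0 T) : LipschitzWith L (fun x => F t (x + Z t)) := by
  simpa [comp_def] using (hL t ht).comp (isometry_add_right (Z t)).lipschitz

theorem continuousOn_uncurry_comp_add_right (hZ : ContinuousOn Z (Icc 0 T))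
    (hF : ContinuousOn (uncurry F) (Icc 0 T ×ˢ univ)) :
    ContinuousOn (uncurry fun t x => F t (x + Z t)) (Icc 0 T ×ˢ univ) :=
  hF.comp (continuousOn_fst.prodMk
    (continuousOn_snd.add (hZ.comp continuousOn_fst fun _ hp => hp.1)))
    fun _ hp => ⟨hp.1, mem_univ _⟩

theorem IsSolution.hasDerivWithinAt_sub (hZ : ContinuousOn Z (Icc 0 T))
    (hF : ContinuousOn (uncurry F) (Icc 0 T ×ˢ univ)) (hY : IsSolution F Z Y₀ T Y) {t : ℝ}
    (ht : t ∈ Icc 0 T) :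
    HasDerivWithinAt (fun s => Y s - Z s) (F t (Y t - Z t + Z t)) (Icc 0 T) t := by
  have hpicard : ∀ s ∈ Icc 0 T,
      Y s - Z s = ODE.picard (fun t x => F t (x + Z t)) 0 Y₀ (fun s => Y s - Z s) s := by
    intro s hs
    simp only [ODE.picard_apply, sub_add_cancel]
    linarith [hY.2 s hs]
  exact (ODE.hasDerivWithinAt_picard_Icc ⟨le_rfl, ht.1.trans ht.2⟩
    (continuousOn_uncurry_comp_add_right hZ hF) (hY.1.sub hZ) (fun _ _ => mem_univ _) Y₀
    ht).congr_of_mem hpicard ht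

theorem exists_isSolution_of_lipschitz {M L : ℝ≥0} (hT : 0 ≤ T) (hZ : ContinuousOn Z (Icc 0 T))
    (hF : ContinuousOn (uncurry F) (Icc 0 T ×ˢ univ)) (hM : ∀ t ∈ Icc 0 T, ∀ y, ‖F t y‖ ≤ M)
    (hL : ∀ t ∈ Icc 0 T, LipschitzWith L (F t)) (Y₀ : ℝ) : ∃ Y, IsSolution F Z Y₀ T Y := by
  have hPL : IsPicardLindelof (fun t x => F t (x + Z t)) (tmin := 0) (tmax := T)
      ⟨0, left_mem_Icc.2 hT⟩ Y₀ ⟨M * T, by positivity⟩ 0 M L := by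
    refine ⟨fun t ht => (lipschitzWith_comp_add_right hL ht).lipschitzOnWith,
      fun x _ => ?_, fun t ht x _ => hM t ht _, by simp [max_eq_left hT]; rfl⟩
    exact (continuousOn_uncurry_comp_add_right hZ hF).comp
      (continuousOn_id.prodMk continuousOn_const) fun _ ht => ⟨ht, mem_univ _⟩
  obtain ⟨X, hX0, hX⟩ := hPL.exists_eq_forall_mem_Icc_hasDerivWithinAt₀
  refine ⟨fun t => X t + Z t, (HasDerivWithinAt.continuousOn hX).add hZ, fun t ht => ?_⟩
  have huIcc : uIcc 0 t ⊆ Icc 0 T := uIcc_subset_Icc ⟨le_rfl, hT⟩ ht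
  have := ODE.picard_eq_of_hasDerivAt (u := univ)
    ((continuousOn_uncurry_comp_add_right hZ hF).mono (prod_mono huIcc subset_rfl))
    (fun s hs => (hX s (huIcc hs)).mono huIcc) (mapsTo_univ _ _)
  rw [ODE.picard_apply, show X 0 = Y₀ from hX0] at this
  simp only [← this]

theorem IsSolution.eqOn_of_lipschitz {L : ℝ≥0} (hZ : ContinuousOn Z (Icc 0 T))
    (hF : ContinuousOn (uncurry F) (Icc 0 T ×ˢ univ)) (hL : ∀ t ∈ Icc 0 T, LipschitzWith L (F t))
    (hY : IsSolution F Z Y₀ T Y) (hY' : IsSolution F Z Y₀ T Y') : EqOn Y Y' (Icc 0 T) := by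
  intro t ht
  have hderiv : ∀ {W}, IsSolution F Z Y₀ T W → ∀ s ∈ Ico 0 T,
      HasDerivWithinAt (fun s => W s - Z s) (F s (W s - Z s + Z s)) (Ici s) s :=
    fun hW s hs => (hW.hasDerivWithinAt_sub hZ hF (Ico_subset_Icc_self hs)).mono_of_mem_nhdsWithin
      (Icc_mem_nhdsGE_of_mem hs)
  have := ODE_solution_unique_of_mem_Icc_right
    (fun s hs => (lipschitzWith_comp_add_right hL (Ico_subset_Icc_self hs)).lipschitzOnWith)
    (hY.1.sub hZ) (hderiv hY)
    (fun _ _ => mem_univ _) (hY'.1.sub hZ) (hderiv hY') (fun _ _ => mem_univ _) ?_ ht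
  · simpa using this
  · simp [hY.2 0 (left_mem_Icc.2 (ht.1.trans ht.2)), hY'.2 0 (left_mem_Icc.2 (ht.1.trans ht.2))]

end Lipschitz

theorem eventually_forall_add_le_sub {φ ψ : ℝ → ℝ} {T : ℝ} (hT : 0 ≤ T)
    (hφ : ContinuousOn φ (Icc 0 T)) (hψ : ContinuousOn ψ (Icc 0 T))
    (hlt : ∀ t ∈ Icc 0 T, φ t < ψ t) : ∀ᶠ δ in 𝓝[>] 0, ∀ t ∈ Icc 0 T, φ t + δ ≤ ψ t - δ := by
  obtain ⟨t₀, ht₀, hmin⟩ := isCompact_Icc.exists_isMinOn ⟨0, left_mem_Icc.2 hT⟩ (hψ.sub hφ)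
  filter_upwards [Ioc_mem_nhdsGT (half_pos (sub_pos.2 (hlt t₀ ht₀)))] with δ hδ t ht
  linarith [show ψ t₀ - φ t₀ ≤ ψ t - φ t from hmin ht, hδ.2]

def clampBand (φ ψ : ℝ → ℝ) (δ t y : ℝ) : ℝ := max (φ t + δ) (min y (ψ t - δ))

def truncDrift (b : ℝ → ℝ → ℝ) (φ ψ : ℝ → ℝ) (δ t y : ℝ) : ℝ := b t (clampBand φ ψ δ t y)

section Truncation

variable {φ ψ : ℝ → ℝ} {b : ℝ → ℝ → ℝ} {T δ t y : ℝ}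

theorem clampBand_of_mem (h₁ : φ t + δ ≤ y) (h₂ : y ≤ ψ t - δ) : clampBand φ ψ δ t y = y := by
  rw [clampBand, min_eq_left h₂, max_eq_right h₁]

theorem clampBand_mem (h : φ t + δ ≤ ψ t - δ) : clampBand φ ψ δ t y ∈ Icc (φ t + δ) (ψ t - δ) :=
  ⟨le_max_left _ _, max_le h (min_le_right _ _)⟩

theorem lipschitzWith_clampBand : LipschitzWith 1 (clampBand φ ψ δ t) :=
  (LipschitzWith.id.min_const _).const_max _

theorem truncDrift_of_mem (h₁ : φ t + δ ≤ y) (h₂ : y ≤ ψ t - δ) :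
    truncDrift b φ ψ δ t y = b t y := by
  rw [truncDrift, clampBand_of_mem h₁ h₂]

theorem truncDrift_clampBand (h : φ t + δ ≤ ψ t - δ) :
    truncDrift b φ ψ δ t (clampBand φ ψ δ t y) = truncDrift b φ ψ δ t y :=
  truncDrift_of_mem (clampBand_mem h).1 (clampBand_mem h).2

theorem isSolution_truncDrift_iff {Z Y : ℝ → ℝ} {Y₀ ε : ℝ} (hδε : δ ≤ ε / 2)
    (hgap : ∀ t ∈ Icc 0 T, ε / 2 < Y t - φ t ∧ ε / 2 < ψ t - Y t) :
    IsSolution (truncDrift b φ ψ δ) Z Y₀ T Y ↔ IsSolution b Z Y₀ T Y := by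
  have h : ∀ t ∈ Icc 0 T, truncDrift b φ ψ δ t (Y t) = b t (Y t) := fun t ht =>
    truncDrift_of_mem (by linarith [hgap t ht]) (by linarith [hgap t ht])
  exact ⟨fun hY => hY.congr h, fun hY => hY.congr fun t ht => (h t ht).symm⟩

theorem continuousOn_clampBand (hφ : ContinuousOn φ (Icc 0 T)) (hψ : ContinuousOn ψ (Icc 0 T)) :
    ContinuousOn (uncurry (clampBand φ ψ δ)) (Icc 0 T ×ˢ univ) := by
  change ContinuousOn (fun p : ℝ × ℝ => max (φ p.1 + δ) (min p.2 (ψ p.1 - δ))) _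
  fun_prop (disch := exact fun _ hp => hp.1)

variable (hδ : 0 < δ) (hband : ∀ t ∈ Icc 0 T, φ t + δ ≤ ψ t - δ)
include hδ hband

theorem continuousOn_truncDrift (hφ : ContinuousOn φ (Icc 0 T)) (hψ : ContinuousOn ψ (Icc 0 T))
    (hb : ContinuousOn (uncurry b) {p : ℝ × ℝ | p.1 ∈ Icc 0 T ∧ φ p.1 < p.2 ∧ p.2 < ψ p.1}) :
    ContinuousOn (uncurry (truncDrift b φ ψ δ)) (Icc 0 T ×ˢ univ) := by
  refine hb.comp (continuousOn_fst.prodMk (continuousOn_clampBand hφ hψ)) fun p hp => ?_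
  have hmem := clampBand_mem (y := p.2) (hband p.1 hp.1)
  exact ⟨hp.1, (lt_add_of_pos_right _ hδ).trans_le hmem.1, hmem.2.trans_lt (sub_lt_self _ hδ)⟩

theorem exists_norm_truncDrift_le (hφ : ContinuousOn φ (Icc 0 T)) (hψ : ContinuousOn ψ (Icc 0 T))
    (hb : ContinuousOn (uncurry b) {p : ℝ × ℝ | p.1 ∈ Icc 0 T ∧ φ p.1 < p.2 ∧ p.2 < ψ p.1}) :
    ∃ M : ℝ≥0, ∀ t ∈ Icc 0 T, ∀ y, ‖truncDrift b φ ψ δ t y‖ ≤ M := by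
  obtain ⟨m₁, hm₁⟩ := isCompact_Icc.bddBelow_image hφ
  obtain ⟨m₂, hm₂⟩ := isCompact_Icc.bddAbove_image hψ
  obtain ⟨C, hC⟩ := (isCompact_Icc.prod (isCompact_Icc (a := m₁) (b := m₂)))
    |>.exists_bound_of_continuousOn
      ((continuousOn_truncDrift hδ hband hφ hψ hb).mono (prod_mono subset_rfl (subset_univ _)))
  refine ⟨C.toNNReal, fun t ht y => ?_⟩
  have hmem := clampBand_mem (y := y) (hband t ht)
  rw [← truncDrift_clampBand (hband t ht)]
  refine (hC (t, clampBand φ ψ δ t y) ⟨ht, ?_, ?_⟩).trans (le_coe_toNNReal C)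
  · linarith [hm₁ (mem_image_of_mem φ ht), hmem.1]
  · linarith [hm₂ (mem_image_of_mem ψ ht), hmem.2]

theorem exists_lipschitzWith_truncDrift (hb : ∃ K, 0 < K ∧ ∀ t ∈ Icc 0 T, ∀ y₁ y₂ : ℝ,
      φ t + δ / 2 < y₁ → y₁ < ψ t - δ / 2 → φ t + δ / 2 < y₂ → y₂ < ψ t - δ / 2 →
      |b t y₁ - b t y₂| ≤ K * |y₁ - y₂|) :
    ∃ L : ℝ≥0, ∀ t ∈ Icc 0 T, LipschitzWith L (truncDrift b φ ψ δ t) := by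
  obtain ⟨K, hK, hKb⟩ := hb
  refine ⟨⟨K, hK.le⟩, fun t ht => LipschitzWith.of_dist_le_mul fun y₁ y₂ => ?_⟩
  have h₁ := clampBand_mem (y := y₁) (hband t ht)
  have h₂ := clampBand_mem (y := y₂) (hband t ht)
  have hclamp := lipschitzWith_clampBand (φ := φ) (ψ := ψ) (δ := δ) (t := t) |>.dist_le_mul y₁ y₂
  simp only [Real.dist_eq, NNReal.coe_one, one_mul] at hclamp ⊢
  calc |truncDrift b φ ψ δ t y₁ - truncDrift b φ ψ δ t y₂|
      ≤ K * |clampBand φ ψ δ t y₁ - clampBand φ ψ δ t y₂| :=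
        hKb t ht _ _ (by linarith [h₁.1]) (by linarith [h₁.2]) (by linarith [h₂.1])
          (by linarith [h₂.2])
    _ ≤ K * |y₁ - y₂| := mul_le_mul_of_nonneg_left hclamp hK.le

end Truncation

end Sandwich

open Sandwich

/-- Existence and uniqueness of the two-sided sandwiched solution: the integral
equation with a drift blowing up near both Hölder barriers has a unique continuous
solution, which stays strictly between φ and ψ. -/
theorem stmt18 (T lam gam c ystar K Y₀ : ℝ) (hT : 0 < T)
    (hlam : lam ∈ Set.Ioo (0:ℝ) 1) (hgam : (1 - lam) / lam < gam)
    (hc : 0 < c) (hystar : 0 < ystar)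
    (phi psi : ℝ → ℝ)
    (hbar : ∀ t ∈ Set.Icc 0 T, phi t < psi t)
    (hHol : ∀ s ∈ Set.Icc 0 T, ∀ t ∈ Set.Icc 0 T,
      |phi t - phi s| + |psi t - psi s| ≤ K * |t - s| ^ lam)
    (b : ℝ → ℝ → ℝ)
    (hbc : ContinuousOn (fun p : ℝ × ℝ => b p.1 p.2)
      {p : ℝ × ℝ | p.1 ∈ Set.Icc 0 T ∧ phi p.1 < p.2 ∧ p.2 < psi p.1})
    (hlip : ∀ ε₁ ε₂ : ℝ, 0 < ε₁ → 0 < ε₂ → ∃ cε, 0 < cε ∧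
      ∀ t ∈ Set.Icc 0 T, ∀ y₁ y₂ : ℝ,
        phi t + ε₁ < y₁ → y₁ < psi t - ε₂ → phi t + ε₁ < y₂ → y₂ < psi t - ε₂ →
        |b t y₁ - b t y₂| ≤ cε * |y₁ - y₂|)
    (hblow₁ : ∀ t ∈ Set.Icc 0 T, ∀ y : ℝ, phi t < y → y < psi t →
      y - phi t < ystar → c * (y - phi t) ^ (-gam) ≤ b t y)
    (hblow₂ : ∀ t ∈ Set.Icc 0 T, ∀ y : ℝ, phi t < y → y < psi t →
      psi t - y < ystar → b t y ≤ -(c * (psi t - y) ^ (-gam)))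
    (Z : ℝ → ℝ) (Lz : ℝ) (hZ0 : Z 0 = 0)
    (hZH : ∀ s ∈ Set.Icc 0 T, ∀ t ∈ Set.Icc 0 T, |Z t - Z s| ≤ Lz * |t - s| ^ lam)
    (hY₀ : Y₀ ∈ Set.Ioo (phi 0) (psi 0)) :
    ∃ Y : ℝ → ℝ,
      (ContinuousOn Y (Set.Icc 0 T) ∧
        (∀ t ∈ Set.Icc 0 T, Y t = Y₀ + (∫ s in (0:ℝ)..t, b s (Y s)) + Z t) ∧
        ∀ t ∈ Set.Icc 0 T, phi t < Y t ∧ Y t < psi t) ∧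
      ∀ Y' : ℝ → ℝ, ContinuousOn Y' (Set.Icc 0 T) →
        (∀ t ∈ Set.Icc 0 T, Y' t = Y₀ + (∫ s in (0:ℝ)..t, b s (Y' s)) + Z t) →
        ∀ t ∈ Set.Icc 0 T, Y' t = Y t := by
  have hφ : ContinuousOn phi (Icc 0 T) := continuousOn_of_abs_sub_le_rpow (K := K) hlam.1
    fun s hs t ht => by linarith [hHol s hs t ht, abs_nonneg (psi t - psi s)]
  have hψ : ContinuousOn psi (Icc 0 T) := continuousOn_of_abs_sub_le_rpow (K := K) hlam.1
    fun s hs t ht => by linarith [hHol s hs t ht, abs_nonneg (phi t - phi s)]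
  have hZ : ContinuousOn Z (Icc 0 T) := continuousOn_of_abs_sub_le_rpow hlam.1 hZH
  have hgam0 : 0 ≤ gam := ((div_pos (sub_pos.2 hlam.2) hlam.1).trans hgam).le
  obtain ⟨ε, hkey, ⟨hε, hεy⟩, -, hεY₀⟩ := ((eventually_forall_rpow_lt (K + Lz) hlam hgam hc).and
    ((eventually_mem_set.2 (Ioo_mem_nhdsGT hystar)).and
      (eventually_mem_set.2 (Ioc_mem_nhdsGT (lt_min (sub_pos.2 hY₀.1) (sub_pos.2 hY₀.2)))))).exists
  obtain ⟨δ, ⟨hδ, hδε⟩, hband⟩ := ((eventually_mem_set.2 (Ioc_mem_nhdsGT (half_pos hε))).and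
    (eventually_forall_add_le_sub hT.le hφ hψ hbar)).exists
  have hbbc := continuousOn_truncDrift hδ hband hφ hψ hbc
  obtain ⟨M, hM⟩ := exists_norm_truncDrift_le hδ hband hφ hψ hbc
  obtain ⟨L, hL⟩ := exists_lipschitzWith_truncDrift hδ hband (hlip _ _ (half_pos hδ) (half_pos hδ))
  obtain ⟨Y, hY⟩ := exists_isSolution_of_lipschitz hT.le hZ hbbc hM hL Y₀
  have hYgap := hY.half_lt_gap_of_blowup hφ hψ (hbbc.mono fun p hp => ⟨hp.1, mem_univ _⟩) hZ0 hε
    hεY₀ hHol hZH hkey hc.le hgam0 hεy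
    (fun t _ y h₁ h₂ => truncDrift_of_mem (by linarith) (by linarith)) hblow₁ hblow₂
  have hYb := (isSolution_truncDrift_iff hδε hYgap).1 hY
  refine ⟨Y, ⟨hYb.1, hYb.2, fun t ht => ⟨by linarith [hYgap t ht], by linarith [hYgap t ht]⟩⟩,
    fun Y' hY'c hY'eq t ht => ?_⟩
  have hY' : IsSolution b Z Y₀ T Y' := ⟨hY'c, hY'eq⟩
  have hY'gap := hY'.half_lt_gap_of_blowup hφ hψ hbc hZ0 hε hεY₀ hHol hZH hkey hc.le hgam0 hεy
    (fun _ _ _ _ _ => rfl) hblow₁ hblow₂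
  exact ((isSolution_truncDrift_iff hδε hY'gap).2 hY').eqOn_of_lipschitz hZ hbbc hL hY ht
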